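/- arXiv:2512.14175 — 4 statements merged into one kernel-verified Lean document; each statement's English description precedes it below -/
import Mathlib

section
/- Suppose all signals x, x_m, x̂, k̂, l̂, ŵ, L, r : ℝ → ℝ are differentiable on [0,∞), the plant, reference model, observer, control law and adaptation laws hold for all t ≥ 0, and r is bounded. Suppose there exist constants δ > 0 and δ̂ := a_m·m₁ − δ > 0 with a_m·m₂ − δ ≥ 0, and the observer gain satisfies 0 < L(t) < 4·δ̂·m₂/m₁² for all t ≥ 0. Then the Lyapunov function t ↦ V(t) is nonincreasing on [0,∞) (so e₁, e₂, k̃, l̃, w̃ remain bounded), and moreover e₁(t) → 0 and e₂(t) → 0 as t → ∞. -/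
/-!
Along the closed loop the Lyapunov function satisfies
`V' = -aₘ m₁ e₁² + m₁ L e₁ e₂ - (aₘ + L) m₂ e₂²`: the `sign b`-weighted adaptation laws cancel
every term containing a parameter error, and the bound on `L` makes the remaining quadratic form at
most `-(δ e₁² + aₘ m₂ e₂²)`. Hence `V` is nonincreasing and all errors stay bounded; so does `xₘ`,
the output of a stable filter driven by the bounded `r`, hence so do `x`, `e₁'` and `e₂'`, and
`e₁`, `e₂` are uniformly continuous. A Barbalat-type argument concludes: if `|e₁|` were `≥ ε` at
arbitrarily late times, it would stay `≥ ε / 2` on intervals of a fixed length, on each of which `V`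
would drop by a fixed amount, contradicting the convergence of the monotone, bounded below `V`.
-/

open Real Filter Set Asymptotics Topology

lemma antitoneOn_Ici_of_hasDerivAt_nonpos {f f' : ℝ → ℝ} {a : ℝ}
    (hf : ∀ t, a ≤ t → HasDerivAt f (f' t) t) (hf' : ∀ t, a ≤ t → f' t ≤ 0) :
    AntitoneOn f (Ici a) :=
  antitoneOn_of_hasDerivWithinAt_nonpos (convex_Ici a)
    (fun t ht => (hf t ht).continuousAt.continuousWithinAt)
    (fun t ht => (hf t (interior_subset ht)).hasDerivWithinAt)
    (fun t ht => hf' t (interior_subset ht))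

lemma AntitoneOn.exists_tendsto_atTop_of_bddBelow {f : ℝ → ℝ} {a : ℝ} (hf : AntitoneOn f (Ici a))
    (hbdd : BddBelow (f '' Ici a)) : ∃ ℓ, Tendsto f atTop (𝓝 ℓ) := by
  obtain ⟨m, hm⟩ := hbdd
  have hanti : Antitone fun t => f (max a t) := fun s t hst =>
    hf (le_max_left a s) (le_max_left a t) (max_le_max le_rfl hst)
  have hbdd' : BddBelow (range fun t => f (max a t)) := by
    refine ⟨m, ?_⟩
    rintro _ ⟨t, rfl⟩
    exact hm ⟨max a t, le_max_left a t, rfl⟩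
  refine ⟨_, (tendsto_atTop_ciInf hanti hbdd').congr' ?_⟩
  filter_upwards [eventually_ge_atTop a] with t ht
  rw [max_eq_right ht]

theorem tendsto_zero_of_hasDerivAt_le_neg_mul_sq {V V' f : ℝ → ℝ} {c : ℝ} (hc : 0 < c)
    (hV : ∀ t, 0 ≤ t → HasDerivAt V (V' t) t) (hV' : ∀ t, 0 ≤ t → V' t ≤ -(c * f t ^ 2))
    (hVbdd : BddBelow (V '' Ici 0)) (hf : UniformContinuousOn f (Ici 0)) :
    Tendsto f atTop (𝓝 0) := by
  have hanti := antitoneOn_Ici_of_hasDerivAt_nonpos hV fun t ht =>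
    (hV' t ht).trans (neg_nonpos.2 (by positivity))
  obtain ⟨ℓ, hℓ⟩ := hanti.exists_tendsto_atTop_of_bddBelow hVbdd
  rw [Metric.tendsto_atTop]
  intro ε hε
  obtain ⟨η, hη, hfη⟩ := Metric.uniformContinuousOn_iff.1 hf (ε / 2) (by positivity)
  obtain ⟨h, hh, hhη⟩ : ∃ h, 0 < h ∧ h < η := ⟨η / 2, by positivity, by linarith⟩
  have hdrop : Tendsto (fun t => V t - V (t + h)) atTop (𝓝 0) := by
    simpa using hℓ.sub (hℓ.comp (tendsto_atTop_add_const_right _ h tendsto_id))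
  obtain ⟨T, hT⟩ := eventually_atTop.1 <|
    hdrop.eventually_lt_const (show 0 < h * (c * (ε / 2) ^ 2) by positivity)
  refine ⟨max T 0, fun t ht => ?_⟩
  have ht₀ : 0 ≤ t := (le_max_right T 0).trans ht
  rw [Real.dist_eq, sub_zero]
  by_contra! hft
  obtain ⟨ξ, hξ, hslope⟩ := exists_hasDerivAt_eq_slope V V' (by linarith : t < t + h)
    (fun u hu => (hV u (ht₀.trans hu.1)).continuousAt.continuousWithinAt)
    (fun u hu => hV u (ht₀.trans hu.1.le))
  have hfξ : ε / 2 < |f ξ| := by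
    have hξt : dist ξ t < η := by
      rw [Real.dist_eq, abs_of_pos (by linarith [hξ.1])]; linarith [hξ.2]
    have := hfη ξ (ht₀.trans hξ.1.le) t ht₀ hξt
    rw [Real.dist_eq] at this
    linarith [abs_sub_abs_le_abs_sub (f t) (f ξ), abs_sub_comm (f ξ) (f t)]
  have hsq : (ε / 2) ^ 2 < f ξ ^ 2 := by
    rw [← sq_abs (f ξ)]; exact pow_lt_pow_left₀ hfξ (by positivity) two_ne_zero
  have hξV := hV' ξ (ht₀.trans hξ.1.le)
  rw [hslope, add_sub_cancel_left, div_le_iff₀ (by positivity)] at hξV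
  have hdrop_t := hT t ((le_max_left T 0).trans ht)
  -- `V` drops by `-h V' ξ ≥ h c f ξ ² > h c (ε / 2) ²` over `[t, t + h]`
  nlinarith [mul_lt_mul_of_pos_left (mul_lt_mul_of_pos_left hsq hc) hh]

lemma Convex.uniformContinuousOn_of_hasDerivAt {f f' : ℝ → ℝ} {s : Set ℝ} (hs : Convex ℝ s)
    (hf : ∀ t ∈ s, HasDerivAt f (f' t) t) (hf' : f' =O[𝓟 s] fun _ => (1 : ℝ)) :
    UniformContinuousOn f s := by
  obtain ⟨C, hC⟩ := isBigO_principal.1 hf'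
  refine (hs.lipschitzOnWith_of_nnnorm_hasDerivWithin_le (C := C.toNNReal)
    (fun t ht => (hf t ht).hasDerivWithinAt) fun t ht => ?_).uniformContinuousOn
  rw [← NNReal.coe_le_coe, coe_nnnorm, Real.coe_toNNReal']
  simpa using (hC t ht).trans (by simp : C * ‖(1 : ℝ)‖ ≤ max C 0)

lemma isBigO_one_of_mul_sq_le {f : ℝ → ℝ} {s : Set ℝ} {c B : ℝ} (hc : 0 < c)
    (h : ∀ t ∈ s, c * f t ^ 2 ≤ B) : f =O[𝓟 s] fun _ => (1 : ℝ) :=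
  isBigO_principal.2 ⟨√(B / c), fun t ht => by
    simpa using Real.abs_le_sqrt ((le_div_iff₀' hc).2 (h t ht))⟩

lemma isBigO_one_of_hasDerivAt_neg_mul_add {y g : ℝ → ℝ} {a : ℝ} (ha : 0 < a)
    (hy : ∀ t, 0 ≤ t → HasDerivAt y (-a * y t + g t) t) (hg : g =O[𝓟 (Ici 0)] fun _ => (1 : ℝ)) :
    y =O[𝓟 (Ici 0)] fun _ => (1 : ℝ) := by
  obtain ⟨C, hC⟩ := isBigO_principal.1 hg
  simp only [norm_one, mul_one, Real.norm_eq_abs] at hC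
  have hC₀ : 0 ≤ C := (abs_nonneg _).trans (hC 0 self_mem_Ici)
  refine isBigO_principal.2 ⟨|y 0| + C / a, fun t (ht : 0 ≤ t) => ?_⟩
  -- variation of constants: `exp (a s) * y s` has derivative `exp (a s) * g s`, so it moves
  -- away from `y 0` no faster than `C / a * (exp (a s) - 1)`
  have hE : ∀ s, HasDerivAt (fun s => exp (a * s)) (a * exp (a * s)) s := fun s => by
    simpa [mul_comm] using ((hasDerivAt_id s).const_mul a).exp
  have hbound := image_norm_le_of_norm_deriv_right_le_deriv_boundary
    (f := fun s => exp (a * s) * y s - y 0) (f' := fun s => exp (a * s) * g s)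
    (B := fun s => C / a * (exp (a * s) - 1)) (B' := fun s => C * exp (a * s)) (a := 0) (b := t)
    (fun s hs => (((hE s).mul (hy s hs.1)).sub_const _).continuousAt.continuousWithinAt)
    (fun s hs => ((((hE s).mul (hy s hs.1)).sub_const _).congr_deriv (by ring)).hasDerivWithinAt)
    (by simp) (fun s => ((hE s).sub_const 1).const_mul (C / a) |>.congr_deriv (by field_simp))
    (fun s hs => by
      rw [Real.norm_eq_abs, abs_mul, abs_of_pos (exp_pos _), mul_comm]
      exact mul_le_mul_of_nonneg_right (hC s hs.1) (exp_pos _).le)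
    (show t ∈ Icc 0 t from ⟨ht, le_rfl⟩)
  have hexp : 1 ≤ exp (a * t) := one_le_exp (by positivity)
  simp only [Real.norm_eq_abs, norm_one, mul_one] at hbound ⊢
  rw [abs_le] at hbound ⊢
  have hCa := div_nonneg hC₀ ha.le
  constructor <;> nlinarith [exp_pos (a * t), mul_nonneg (sub_nonneg.2 hexp) (abs_nonneg (y 0)),
    mul_nonneg (sub_nonneg.2 hexp) hCa, neg_abs_le (y 0), le_abs_self (y 0)]

theorem Real.abs_mul_sign (r : ℝ) : |r| * sign r = r := by
  rcases lt_trichotomy r 0 with hr | rfl | hr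
  · rw [sign_of_neg hr, abs_of_neg hr]; ring
  · simp
  · rw [sign_of_pos hr, abs_of_pos hr, mul_one]

noncomputable def lyapunov (m₁ m₂ b γ₁ γ₂ γ₃ : ℝ) (e₁ e₂ k l w : ℝ → ℝ) (t : ℝ) : ℝ :=
  (1/2) * m₁ * (e₁ t) ^ 2 + (1/2) * m₂ * (e₂ t) ^ 2
    + (|b| / (2 * γ₁)) * (k t) ^ 2 + (|b| / (2 * γ₂)) * (l t) ^ 2
    + (|b| / (2 * γ₃)) * (w t) ^ 2

/-- The closed-loop error equations, with `e₁ = x̂ - xₘ`, `e₂ = x - x̂` and `k`, `l`, `w` the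
parameter errors `k̃`, `l̃`, `w̃`. -/
structure ErrorDynamics (aₘ b γ₁ γ₂ γ₃ m₂ : ℝ) (L x r e₁ e₂ k l w : ℝ → ℝ) : Prop where
  hasDerivAt_e₁ : ∀ t, 0 ≤ t → HasDerivAt e₁ (-aₘ * e₁ t + L t * e₂ t) t
  hasDerivAt_e₂ : ∀ t, 0 ≤ t →
    HasDerivAt e₂ (-(aₘ + L t) * e₂ t - b * k t * x t + b * l t * r t + b * w t) t
  hasDerivAt_k : ∀ t, 0 ≤ t → HasDerivAt k (sign b * x t * γ₁ * m₂ * e₂ t) t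
  hasDerivAt_l : ∀ t, 0 ≤ t → HasDerivAt l (-sign b * r t * γ₂ * m₂ * e₂ t) t
  hasDerivAt_w : ∀ t, 0 ≤ t → HasDerivAt w (-sign b * γ₃ * m₂ * e₂ t) t

lemma lyapunov_rate_le {aₘ m₁ m₂ δ ℓ y₁ y₂ : ℝ} (hm₂ : 0 < m₂) (hℓ : 0 < ℓ)
    (hℓ' : ℓ < 4 * (aₘ * m₁ - δ) * m₂ / m₁ ^ 2) :
    -(aₘ * m₁) * y₁ ^ 2 + m₁ * ℓ * y₁ * y₂ - (aₘ + ℓ) * m₂ * y₂ ^ 2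
      ≤ -(δ * y₁ ^ 2 + aₘ * m₂ * y₂ ^ 2) := by
  rcases eq_or_ne m₁ 0 with rfl | hm₁
  · simp at hℓ'; linarith
  rw [lt_div_iff₀ (by positivity)] at hℓ'
  -- `4 ℓ m₂` times the gap is `(2 ℓ m₂ y₂ - ℓ m₁ y₁)² + ℓ (4 (aₘ m₁ - δ) m₂ - ℓ m₁²) y₁²`
  have hgap : 0 ≤ 4 * ℓ * m₂ * ((aₘ * m₁ - δ) * y₁ ^ 2 - m₁ * ℓ * y₁ * y₂ + ℓ * m₂ * y₂ ^ 2) := by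
    nlinarith [sq_nonneg (2 * ℓ * m₂ * y₂ - ℓ * m₁ * y₁),
      mul_nonneg hℓ.le (mul_nonneg (sub_nonneg.2 hℓ'.le) (sq_nonneg y₁))]
  nlinarith [nonneg_of_mul_nonneg_right hgap (by positivity)]

lemma isBigO_one_of_antitoneOn_lyapunov {m₁ m₂ b γ₁ γ₂ γ₃ : ℝ} {e₁ e₂ k l w : ℝ → ℝ}
    (hanti : AntitoneOn (lyapunov m₁ m₂ b γ₁ γ₂ γ₃ e₁ e₂ k l w) (Ici 0)) (hb : b ≠ 0)
    (hm₁ : 0 < m₁) (hm₂ : 0 < m₂) (hγ₁ : 0 < γ₁) (hγ₂ : 0 < γ₂) (hγ₃ : 0 < γ₃) :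
    e₁ =O[𝓟 (Ici 0)] (fun _ => (1 : ℝ)) ∧ e₂ =O[𝓟 (Ici 0)] (fun _ => (1 : ℝ)) ∧
      k =O[𝓟 (Ici 0)] (fun _ => (1 : ℝ)) ∧ l =O[𝓟 (Ici 0)] (fun _ => (1 : ℝ)) ∧
      w =O[𝓟 (Ici 0)] (fun _ => (1 : ℝ)) := by
  obtain ⟨V₀, hle⟩ : ∃ V₀, ∀ t ∈ Ici (0 : ℝ), lyapunov m₁ m₂ b γ₁ γ₂ γ₃ e₁ e₂ k l w t ≤ V₀ :=
    ⟨_, fun t ht => hanti self_mem_Ici ht ht⟩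
  simp only [lyapunov] at hle
  have hc (γ : ℝ) (hγ : 0 < γ) : 0 < |b| / (2 * γ) := div_pos (abs_pos.2 hb) (by positivity)
  refine ⟨isBigO_one_of_mul_sq_le (B := V₀) (c := 1 / 2 * m₁) (by positivity) fun t ht => ?_,
    isBigO_one_of_mul_sq_le (B := V₀) (c := 1 / 2 * m₂) (by positivity) fun t ht => ?_,
    isBigO_one_of_mul_sq_le (B := V₀) (hc γ₁ hγ₁) fun t ht => ?_,
    isBigO_one_of_mul_sq_le (B := V₀) (hc γ₂ hγ₂) fun t ht => ?_,
    isBigO_one_of_mul_sq_le (B := V₀) (hc γ₃ hγ₃) fun t ht => ?_⟩ <;>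
  nlinarith [hle t ht, mul_nonneg hm₁.le (sq_nonneg (e₁ t)), mul_nonneg hm₂.le (sq_nonneg (e₂ t)),
    mul_nonneg (hc γ₁ hγ₁).le (sq_nonneg (k t)), mul_nonneg (hc γ₂ hγ₂).le (sq_nonneg (l t)),
    mul_nonneg (hc γ₃ hγ₃).le (sq_nonneg (w t))]

namespace ErrorDynamics

variable {aₘ b γ₁ γ₂ γ₃ m₁ m₂ : ℝ} {L x r e₁ e₂ k l w : ℝ → ℝ}

lemma hasDerivAt_lyapunov (h : ErrorDynamics aₘ b γ₁ γ₂ γ₃ m₂ L x r e₁ e₂ k l w)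
    (hγ₁ : γ₁ ≠ 0) (hγ₂ : γ₂ ≠ 0) (hγ₃ : γ₃ ≠ 0) (t : ℝ) (ht : 0 ≤ t) :
    HasDerivAt (lyapunov m₁ m₂ b γ₁ γ₂ γ₃ e₁ e₂ k l w)
      (-(aₘ * m₁) * e₁ t ^ 2 + m₁ * L t * e₁ t * e₂ t - (aₘ + L t) * m₂ * e₂ t ^ 2) t := by
  have hV := (((((h.hasDerivAt_e₁ t ht).pow 2).const_mul (1 / 2 * m₁)).add
    (((h.hasDerivAt_e₂ t ht).pow 2).const_mul (1 / 2 * m₂))).add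
    (((h.hasDerivAt_k t ht).pow 2).const_mul (|b| / (2 * γ₁)))).add
    (((h.hasDerivAt_l t ht).pow 2).const_mul (|b| / (2 * γ₂))) |>.add
    (((h.hasDerivAt_w t ht).pow 2).const_mul (|b| / (2 * γ₃)))
  refine hV.congr_deriv ?_
  -- `|b| * sign b = b` makes the parameter-error terms cancel
  field_simp
  linear_combination (2 * m₂ * e₂ t * (k t * x t - l t * r t - w t)) * (Real.abs_mul_sign b)

lemma uniformContinuousOn_errors (h : ErrorDynamics aₘ b γ₁ γ₂ γ₃ m₂ L x r e₁ e₂ k l w)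
    (hL : L =O[𝓟 (Ici 0)] fun _ => (1 : ℝ)) (hx : x =O[𝓟 (Ici 0)] fun _ => (1 : ℝ))
    (hr : r =O[𝓟 (Ici 0)] fun _ => (1 : ℝ)) (he₁ : e₁ =O[𝓟 (Ici 0)] fun _ => (1 : ℝ))
    (he₂ : e₂ =O[𝓟 (Ici 0)] fun _ => (1 : ℝ)) (hk : k =O[𝓟 (Ici 0)] fun _ => (1 : ℝ))
    (hl : l =O[𝓟 (Ici 0)] fun _ => (1 : ℝ)) (hw : w =O[𝓟 (Ici 0)] fun _ => (1 : ℝ)) :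
    UniformContinuousOn e₁ (Ici 0) ∧ UniformContinuousOn e₂ (Ici 0) := by
  have mul : ∀ {f g : ℝ → ℝ}, f =O[𝓟 (Ici 0)] (fun _ => (1 : ℝ)) →
      g =O[𝓟 (Ici 0)] (fun _ => (1 : ℝ)) → (fun t => f t * g t) =O[𝓟 (Ici 0)] fun _ => (1 : ℝ) :=
    fun hf hg => by simpa only [mul_one] using hf.mul hg
  have haₘ : (fun _ => aₘ) =O[𝓟 (Ici (0 : ℝ))] fun _ => (1 : ℝ) := isBigO_const_one ℝ aₘ _
  constructor
  · exact (convex_Ici 0).uniformContinuousOn_of_hasDerivAt h.hasDerivAt_e₁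
      ((he₁.const_mul_left (-aₘ)).add (mul hL he₂))
  · exact (convex_Ici 0).uniformContinuousOn_of_hasDerivAt h.hasDerivAt_e₂
      ((((mul (haₘ.add hL).neg_left he₂).sub (mul (hk.const_mul_left b) hx)).add
        (mul (hl.const_mul_left b) hr)).add (hw.const_mul_left b))

lemma antitoneOn_lyapunov {δ : ℝ} (h : ErrorDynamics aₘ b γ₁ γ₂ γ₃ m₂ L x r e₁ e₂ k l w)
    (ham : 0 < aₘ) (hγ₁ : 0 < γ₁) (hγ₂ : 0 < γ₂) (hγ₃ : 0 < γ₃) (hm₂ : 0 < m₂) (hδ : 0 < δ)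
    (hL : ∀ t, 0 ≤ t → 0 < L t ∧ L t < 4 * (aₘ * m₁ - δ) * m₂ / m₁ ^ 2) :
    AntitoneOn (lyapunov m₁ m₂ b γ₁ γ₂ γ₃ e₁ e₂ k l w) (Ici 0) :=
  antitoneOn_Ici_of_hasDerivAt_nonpos (h.hasDerivAt_lyapunov hγ₁.ne' hγ₂.ne' hγ₃.ne') fun t ht =>
    (lyapunov_rate_le hm₂ (hL t ht).1 (hL t ht).2).trans (neg_nonpos.2 (by positivity))

theorem tendsto_zero {δ : ℝ} (h : ErrorDynamics aₘ b γ₁ γ₂ γ₃ m₂ L x r e₁ e₂ k l w)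
    (hb : b ≠ 0) (ham : 0 < aₘ) (hγ₁ : 0 < γ₁) (hγ₂ : 0 < γ₂) (hγ₃ : 0 < γ₃)
    (hm₁ : 0 < m₁) (hm₂ : 0 < m₂) (hδ : 0 < δ)
    (hL : ∀ t, 0 ≤ t → 0 < L t ∧ L t < 4 * (aₘ * m₁ - δ) * m₂ / m₁ ^ 2)
    (hr : r =O[𝓟 (Ici 0)] fun _ => (1 : ℝ)) {xm : ℝ → ℝ}
    (hxm : xm =O[𝓟 (Ici 0)] fun _ => (1 : ℝ)) (hx : ∀ t, x t = xm t + e₁ t + e₂ t) :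
    Tendsto e₁ atTop (𝓝 0) ∧ Tendsto e₂ atTop (𝓝 0) := by
  have hV := h.hasDerivAt_lyapunov (m₁ := m₁) hγ₁.ne' hγ₂.ne' hγ₃.ne'
  have hrate (t : ℝ) (ht : 0 ≤ t) :=
    lyapunov_rate_le (y₁ := e₁ t) (y₂ := e₂ t) hm₂ (hL t ht).1 (hL t ht).2
  have hVbdd : BddBelow (lyapunov m₁ m₂ b γ₁ γ₂ γ₃ e₁ e₂ k l w '' Ici 0) :=
    ⟨0, by rintro _ ⟨t, -, rfl⟩; unfold lyapunov; positivity⟩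
  obtain ⟨he₁, he₂, hk, hl, hw⟩ := isBigO_one_of_antitoneOn_lyapunov
    (h.antitoneOn_lyapunov ham hγ₁ hγ₂ hγ₃ hm₂ hδ hL) hb hm₁ hm₂ hγ₁ hγ₂ hγ₃
  have hLO : L =O[𝓟 (Ici 0)] fun _ => (1 : ℝ) := isBigO_principal.2
    ⟨_, fun t ht => by simpa [abs_of_pos (hL t ht).1] using (hL t ht).2.le⟩
  have hxO : x =O[𝓟 (Ici 0)] fun _ => (1 : ℝ) :=
    ((hxm.add he₁).add he₂).congr_left fun t => (hx t).symm
  obtain ⟨hu₁, hu₂⟩ := h.uniformContinuousOn_errors hLO hxO hr he₁ he₂ hk hl hw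
  refine ⟨tendsto_zero_of_hasDerivAt_le_neg_mul_sq hδ hV (fun t ht => ?_) hVbdd hu₁,
    tendsto_zero_of_hasDerivAt_le_neg_mul_sq (mul_pos ham hm₂) hV (fun t ht => ?_) hVbdd hu₂⟩
  · linarith [hrate t ht, mul_nonneg (mul_pos ham hm₂).le (sq_nonneg (e₂ t))]
  · linarith [hrate t ht, mul_nonneg hδ.le (sq_nonneg (e₁ t))]

end ErrorDynamics

theorem stmt_0_general
    (a b w aₘ bₘ kstar lstar γ₁ γ₂ γ₃ m₁ m₂ δ : ℝ)
    (x xm xh kh lh wh L r u : ℝ → ℝ)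
    (hb : b ≠ 0) (ham : 0 < aₘ)
    (hγ₁ : 0 < γ₁) (hγ₂ : 0 < γ₂) (hγ₃ : 0 < γ₃)
    (hm₁ : 0 < m₁) (hm₂ : 0 < m₂)
    (hmatch_k : aₘ = b * kstar - a) (hmatch_l : bₘ = lstar * b)
    -- control law u = -k̂·y + l̂·r + ŵ (with y = x)
    (hu : ∀ t, 0 ≤ t → u t = -(kh t) * x t + lh t * r t + wh t)
    -- plant dynamics
    (hplant : ∀ t, 0 ≤ t → HasDerivAt x (a * x t + b * (u t - w)) t)
    -- reference model
    (hrefm : ∀ t, 0 ≤ t → HasDerivAt xm (-aₘ * xm t + bₘ * r t) t)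
    -- observer
    (hobs : ∀ t, 0 ≤ t →
      HasDerivAt xh (-aₘ * xh t + bₘ * r t + L t * (x t - xh t)) t)
    -- adaptation laws
    (hkh : ∀ t, 0 ≤ t →
      HasDerivAt kh (Real.sign b * x t * γ₁ * m₂ * (x t - xh t)) t)
    (hlh : ∀ t, 0 ≤ t →
      HasDerivAt lh (-(Real.sign b) * r t * γ₂ * m₂ * (x t - xh t)) t)
    (hwh : ∀ t, 0 ≤ t →
      HasDerivAt wh (-(Real.sign b) * γ₃ * m₂ * (x t - xh t)) t)
    -- L differentiable, r bounded
    (hrbdd : ∃ M, ∀ t, 0 ≤ t → |r t| ≤ M)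
    -- margin constants
    (hδ : 0 < δ)
    -- observer gain bound
    (hL : ∀ t, 0 ≤ t → 0 < L t ∧ L t < 4 * (aₘ * m₁ - δ) * m₂ / m₁ ^ 2)
    -- error variables and Lyapunov function
    (e₁ e₂ kt lt wt V : ℝ → ℝ)
    (he₁ : e₁ = fun t => xh t - xm t)
    (he₂ : e₂ = fun t => x t - xh t)
    (hkt : kt = fun t => kh t - kstar)
    (hlt : lt = fun t => lh t - lstar)
    (hwt : wt = fun t => wh t - w)
    (hV : V = fun t => (1/2) * m₁ * (e₁ t) ^ 2 + (1/2) * m₂ * (e₂ t) ^ 2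
        + (|b| / (2 * γ₁)) * (kt t) ^ 2 + (|b| / (2 * γ₂)) * (lt t) ^ 2
        + (|b| / (2 * γ₃)) * (wt t) ^ 2) :
    AntitoneOn V (Set.Ici (0 : ℝ)) ∧
    Tendsto e₁ atTop (nhds 0) ∧ Tendsto e₂ atTop (nhds 0) := by
  subst he₁ he₂ hkt hlt hwt hV
  obtain ⟨M, hM⟩ := hrbdd
  have hr : r =O[𝓟 (Ici 0)] fun _ => (1 : ℝ) := isBigO_principal.2 ⟨M, by simpa using hM⟩
  have hdyn : ErrorDynamics aₘ b γ₁ γ₂ γ₃ m₂ L x r (fun t => xh t - xm t) (fun t => x t - xh t)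
      (fun t => kh t - kstar) (fun t => lh t - lstar) (fun t => wh t - w) :=
    { hasDerivAt_e₁ := fun t ht => ((hobs t ht).sub (hrefm t ht)).congr_deriv (by ring)
      hasDerivAt_e₂ := fun t ht => ((hplant t ht).sub (hobs t ht)).congr_deriv <| by
        rw [hu t ht]; linear_combination x t * hmatch_k - r t * hmatch_l
      hasDerivAt_k := fun t ht => (hkh t ht).sub_const kstar
      hasDerivAt_l := fun t ht => (hlh t ht).sub_const lstar
      hasDerivAt_w := fun t ht => (hwh t ht).sub_const w }
  have hxm := isBigO_one_of_hasDerivAt_neg_mul_add ham hrefm (hr.const_mul_left bₘ)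
  exact ⟨hdyn.antitoneOn_lyapunov ham hγ₁ hγ₂ hγ₃ hm₂ hδ hL,
    hdyn.tendsto_zero hb ham hγ₁ hγ₂ hγ₃ hm₁ hm₂ hδ hL hr hxm fun t => by ring⟩

/-- Lemma 1 of the paper (KalMRACO without blending).
Under the plant, reference model, observer, control law and adaptation laws,
with the observer gain bounded in `(0, 4·δ̂·m₂/m₁²)`, the Lyapunov function `V`
is nonincreasing on `[0,∞)` and the errors `e₁, e₂` converge to zero. -/
theorem stmt_0
    (a b w aₘ bₘ kstar lstar γ₁ γ₂ γ₃ m₁ m₂ δ : ℝ)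
    (x xm xh kh lh wh L r u : ℝ → ℝ)
    (hb : b ≠ 0) (ham : 0 < aₘ)
    (hγ₁ : 0 < γ₁) (hγ₂ : 0 < γ₂) (hγ₃ : 0 < γ₃)
    (hm₁ : 0 < m₁) (hm₂ : 0 < m₂)
    (hmatch_k : aₘ = b * kstar - a) (hmatch_l : bₘ = lstar * b)
    -- control law u = -k̂·y + l̂·r + ŵ (with y = x)
    (hu : ∀ t, 0 ≤ t → u t = -(kh t) * x t + lh t * r t + wh t)
    -- plant dynamics
    (hplant : ∀ t, 0 ≤ t → HasDerivAt x (a * x t + b * (u t - w)) t)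
    -- reference model
    (hrefm : ∀ t, 0 ≤ t → HasDerivAt xm (-aₘ * xm t + bₘ * r t) t)
    -- observer
    (hobs : ∀ t, 0 ≤ t →
      HasDerivAt xh (-aₘ * xh t + bₘ * r t + L t * (x t - xh t)) t)
    -- adaptation laws
    (hkh : ∀ t, 0 ≤ t →
      HasDerivAt kh (Real.sign b * x t * γ₁ * m₂ * (x t - xh t)) t)
    (hlh : ∀ t, 0 ≤ t →
      HasDerivAt lh (-(Real.sign b) * r t * γ₂ * m₂ * (x t - xh t)) t)
    (hwh : ∀ t, 0 ≤ t →
      HasDerivAt wh (-(Real.sign b) * γ₃ * m₂ * (x t - xh t)) t)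
    -- L differentiable, r bounded
    (hLdiff : ∀ t, 0 ≤ t → DifferentiableAt ℝ L t)
    (hrbdd : ∃ M, ∀ t, 0 ≤ t → |r t| ≤ M)
    -- margin constants
    (hδ : 0 < δ)
    (hδhat : 0 < aₘ * m₁ - δ)
    (hδ2 : 0 ≤ aₘ * m₂ - δ)
    -- observer gain bound
    (hL : ∀ t, 0 ≤ t → 0 < L t ∧ L t < 4 * (aₘ * m₁ - δ) * m₂ / m₁ ^ 2)
    -- error variables and Lyapunov function
    (e₁ e₂ kt lt wt V : ℝ → ℝ)
    (he₁ : e₁ = fun t => xh t - xm t)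
    (he₂ : e₂ = fun t => x t - xh t)
    (hkt : kt = fun t => kh t - kstar)
    (hlt : lt = fun t => lh t - lstar)
    (hwt : wt = fun t => wh t - w)
    (hV : V = fun t => (1/2) * m₁ * (e₁ t) ^ 2 + (1/2) * m₂ * (e₂ t) ^ 2
        + (|b| / (2 * γ₁)) * (kt t) ^ 2 + (|b| / (2 * γ₂)) * (lt t) ^ 2
        + (|b| / (2 * γ₃)) * (wt t) ^ 2) :
    AntitoneOn V (Set.Ici (0 : ℝ)) ∧
    Tendsto e₁ atTop (nhds 0) ∧ Tendsto e₂ atTop (nhds 0) :=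
  stmt_0_general a b w aₘ bₘ kstar lstar γ₁ γ₂ γ₃ m₁ m₂ δ x xm xh kh lh wh L r u hb ham hγ₁ hγ₂ hγ₃
    hm₁ hm₂ hmatch_k hmatch_l hu hplant hrefm hobs hkh hlh hwh hrbdd hδ hL e₁ e₂ kt lt wt V he₁ he₂
    hkt hlt hwt hV
end

section
/- Suppose e₁, e₂, k̃, l̃, w̃ : ℝ → ℝ are differentiable at t and satisfy de₁/dt = −a_m·e₁ + L·e₂, de₂/dt = −(a_m + L)·e₂ − b·k̃·y + b·l̃·r + b·w̃, dk̃/dt = sgn(b)·y·γ₁·m₂·e₂, dl̃/dt = −sgn(b)·r·γ₂·m₂·e₂, dw̃/dt = −sgn(b)·γ₃·m₂·e₂ at time t (for given values L, y, r at time t). Then the derivative of V(t) := ½·m₁·e₁(t)² + ½·m₂·e₂(t)² + (|b|/(2γ₁))·k̃(t)² + (|b|/(2γ₂))·l̃(t)² + (|b|/(2γ₃))·w̃(t)² at t equals −(a_m·m₁·e₁(t)² − L·m₁·e₁(t)·e₂(t) + (L + a_m)·m₂·e₂(t)²). -/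
/-!
Differentiate term by term. The adaptation laws are chosen so that, since `|b| · sgn b = b`,
the derivatives of the parameter-error terms `|b|/(2γᵢ) · x̃²` cancel exactly the terms
`−b k̃ y + b l̃ r + b w̃` that `ė₂` contributes to `m₂ e₂ ė₂`; only the quadratic form in `e₁, e₂` remains.
-/

theorem Real.abs_mul_sign_s4 (x : ℝ) : |x| * Real.sign x = x := by
  rcases lt_trichotomy x 0 with hx | rfl | hx
  · rw [abs_of_neg hx, Real.sign_of_neg hx]
    ring
  · simp
  · rw [abs_of_pos hx, Real.sign_of_pos hx]
    ring

theorem HasDerivAt.half_mul_sq {f : ℝ → ℝ} {f' t : ℝ} (m : ℝ) (hf : HasDerivAt f f' t) :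
    HasDerivAt (fun s => (1/2) * m * f s ^ 2) (m * f t * f') t :=
  ((hf.fun_pow 2).const_mul _).congr_deriv (by push_cast; ring)

theorem HasDerivAt.abs_div_two_mul_sq {f : ℝ → ℝ} {b γ g t : ℝ} (hγ : γ ≠ 0)
    (hf : HasDerivAt f (Real.sign b * γ * g) t) :
    HasDerivAt (fun s => |b| / (2 * γ) * f s ^ 2) (b * f t * g) t := by
  refine ((hf.fun_pow 2).const_mul _).congr_deriv ?_
  push_cast
  field_simp
  linear_combination f t * g * Real.abs_mul_sign_s4 b

theorem stmt_4_general
    (aₘ b m₁ m₂ γ₁ γ₂ γ₃ L y r t : ℝ)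
    (e₁ e₂ kt lt wt : ℝ → ℝ)
    (hγ₁ : 0 < γ₁) (hγ₂ : 0 < γ₂) (hγ₃ : 0 < γ₃)
    (hd1 : HasDerivAt e₁ (-aₘ * e₁ t + L * e₂ t) t)
    (hd2 : HasDerivAt e₂
      (-(aₘ + L) * e₂ t - b * kt t * y + b * lt t * r + b * wt t) t)
    (hd3 : HasDerivAt kt (Real.sign b * y * γ₁ * m₂ * e₂ t) t)
    (hd4 : HasDerivAt lt (-(Real.sign b) * r * γ₂ * m₂ * e₂ t) t)
    (hd5 : HasDerivAt wt (-(Real.sign b) * γ₃ * m₂ * e₂ t) t) :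
    HasDerivAt (fun s => (1/2) * m₁ * (e₁ s) ^ 2 + (1/2) * m₂ * (e₂ s) ^ 2
        + (|b| / (2 * γ₁)) * (kt s) ^ 2 + (|b| / (2 * γ₂)) * (lt s) ^ 2
        + (|b| / (2 * γ₃)) * (wt s) ^ 2)
      (-(aₘ * m₁ * (e₁ t) ^ 2 - L * m₁ * e₁ t * e₂ t
          + (L + aₘ) * m₂ * (e₂ t) ^ 2)) t := by
  have h₁ := hd1.half_mul_sq m₁
  have h₂ := hd2.half_mul_sq m₂
  have hk := HasDerivAt.abs_div_two_mul_sq (g := y * m₂ * e₂ t) hγ₁.ne'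
    (hd3.congr_deriv (by ring))
  have hl := HasDerivAt.abs_div_two_mul_sq (g := -(r * m₂ * e₂ t)) hγ₂.ne'
    (hd4.congr_deriv (by ring))
  have hw := HasDerivAt.abs_div_two_mul_sq (g := -(m₂ * e₂ t)) hγ₃.ne'
    (hd5.congr_deriv (by ring))
  exact ((((h₁.add h₂).add hk).add hl).add hw).congr_deriv (by ring)

/-- Derivative of the Lyapunov function (unblended case).
With the error dynamics and adaptation laws holding at `t`, the derivative of
`V` at `t` equals `−(a_m·m₁·e₁² − L·m₁·e₁·e₂ + (L + a_m)·m₂·e₂²)`. -/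
theorem stmt_4
    (aₘ b m₁ m₂ γ₁ γ₂ γ₃ L y r t : ℝ)
    (e₁ e₂ kt lt wt : ℝ → ℝ)
    (ham : 0 < aₘ) (hb : b ≠ 0)
    (hm₁ : 0 < m₁) (hm₂ : 0 < m₂)
    (hγ₁ : 0 < γ₁) (hγ₂ : 0 < γ₂) (hγ₃ : 0 < γ₃)
    (hd1 : HasDerivAt e₁ (-aₘ * e₁ t + L * e₂ t) t)
    (hd2 : HasDerivAt e₂
      (-(aₘ + L) * e₂ t - b * kt t * y + b * lt t * r + b * wt t) t)
    (hd3 : HasDerivAt kt (Real.sign b * y * γ₁ * m₂ * e₂ t) t)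
    (hd4 : HasDerivAt lt (-(Real.sign b) * r * γ₂ * m₂ * e₂ t) t)
    (hd5 : HasDerivAt wt (-(Real.sign b) * γ₃ * m₂ * e₂ t) t) :
    HasDerivAt (fun s => (1/2) * m₁ * (e₁ s) ^ 2 + (1/2) * m₂ * (e₂ s) ^ 2
        + (|b| / (2 * γ₁)) * (kt s) ^ 2 + (|b| / (2 * γ₂)) * (lt s) ^ 2
        + (|b| / (2 * γ₃)) * (wt s) ^ 2)
      (-(aₘ * m₁ * (e₁ t) ^ 2 - L * m₁ * e₁ t * e₂ t
          + (L + aₘ) * m₂ * (e₂ t) ^ 2)) t :=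
  stmt_4_general aₘ b m₁ m₂ γ₁ γ₂ γ₃ L y r t e₁ e₂ kt lt wt hγ₁ hγ₂ hγ₃ hd1 hd2 hd3 hd4 hd5
end

section
/- Let x, x̂, k̂, l̂, ŵ, L, r : ℝ → ℝ with x and x̂ differentiable at t, satisfying ẋ(t) = a·x(t) + b·(u(t) − w) with the blended control u = −k̂·(θ(e₂)·x̂ + (1 − θ(e₂))·x) + l̂·r + ŵ, and dx̂/dt(t) = −a_m·x̂(t) + b_m·r(t) + L(t)·(x(t) − x̂(t)), where a_m = b·k* − a and b_m = l*·b. Then the observer error e₂ := x − x̂ satisfies de₂/dt(t) = −(a_m + L(t))·e₂(t) + b·l̃(t)·r(t) − b·k̃(t)·x(t) + b·k̂(t)·θ(e₂(t))·e₂(t) + b·w̃(t), where k̃ = k̂ − k*, l̃ = l̂ − l*, w̃ = ŵ − w. -/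
theorem stmt_13_general
    (a b w aₘ bₘ kstar lstar t : ℝ)
    (x xh kh lh wh L r u : ℝ → ℝ) (θ : ℝ → ℝ)
    (hmatch_k : aₘ = b * kstar - a) (hmatch_l : bₘ = lstar * b)
    (hu : u t = -(kh t) * (θ (x t - xh t) * xh t
        + (1 - θ (x t - xh t)) * x t) + lh t * r t + wh t)
    (hplant : HasDerivAt x (a * x t + b * (u t - w)) t)
    (hobs : HasDerivAt xh (-aₘ * xh t + bₘ * r t + L t * (x t - xh t)) t) :
    HasDerivAt (fun s => x s - xh s)
      (-(aₘ + L t) * (x t - xh t) + b * (lh t - lstar) * r t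
        - b * (kh t - kstar) * x t
        + b * kh t * θ (x t - xh t) * (x t - xh t) + b * (wh t - w)) t := by
  refine (hplant.sub hobs).congr_deriv ?_
  rw [hu, hmatch_k, hmatch_l]
  ring

/-- Observer-error dynamics with the blended control law.
With plant `ẋ = a·x + b·(u − w)`, blended control
`u = −k̂·(θ(e₂)·x̂ + (1 − θ(e₂))·x) + l̂·r + ŵ`, observer dynamics, and matching
conditions, the error `e₂ := x − x̂` satisfies
`ė₂ = −(a_m + L)·e₂ + b·l̃·r − b·k̃·x + b·k̂·θ(e₂)·e₂ + b·w̃`. -/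
theorem stmt_13
    (a b w aₘ bₘ kstar lstar α β t : ℝ)
    (x xh kh lh wh L r u : ℝ → ℝ) (θ : ℝ → ℝ)
    (hβ : 0 < β) (hα : 0 < α)
    (hθ : θ = fun s => 2 * α / (1 + Real.exp (β * |s|)))
    (hmatch_k : aₘ = b * kstar - a) (hmatch_l : bₘ = lstar * b)
    (hu : u t = -(kh t) * (θ (x t - xh t) * xh t
        + (1 - θ (x t - xh t)) * x t) + lh t * r t + wh t)
    (hplant : HasDerivAt x (a * x t + b * (u t - w)) t)
    (hobs : HasDerivAt xh (-aₘ * xh t + bₘ * r t + L t * (x t - xh t)) t) :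
    HasDerivAt (fun s => x s - xh s)
      (-(aₘ + L t) * (x t - xh t) + b * (lh t - lstar) * r t
        - b * (kh t - kstar) * x t
        + b * kh t * θ (x t - xh t) * (x t - xh t) + b * (wh t - w)) t :=
  stmt_13_general a b w aₘ bₘ kstar lstar t x xh kh lh wh L r u θ hmatch_k hmatch_l hu hplant hobs
end

section
/- Suppose e₁, e₂, k̃, l̃, w̃ : ℝ → ℝ are differentiable at t and satisfy de₁/dt = −a_m·e₁ + L·e₂, de₂/dt = −(a_m + L)·e₂ − b·k̃·y + b·l̃·r + b·w̃, dk̃/dt = sgn(b)·y·γ₁·m₂·e₂, dl̃/dt = −sgn(b)·r·γ₂·m₂·e₂, dw̃/dt = −sgn(b)·γ₃·m₂·e₂ at time t (for given values L, y, r at time t). If moreover there exist δ > 0 and δ̂ := a_m·m₁ − δ > 0 with a_m·m₂ − δ ≥ 0 and 0 < L < 4·δ̂·m₂/m₁², then the derivative of V(t) := ½·m₁·e₁(t)² + ½·m₂·e₂(t)² + (|b|/(2γ₁))·k̃(t)² + (|b|/(2γ₂))·l̃(t)² + (|b|/(2γ₃))·w̃(t)² at t satisfies dV/dt(t) ≤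 −δ·(e₁(t)² + e₂(t)²). -/
set_option maxHeartbeats 1000000 in
/-- Lyapunov decrease (unblended case).
With the error dynamics and adaptation laws holding at `t`, and the margin and
gain conditions satisfied, `dV/dt(t) ≤ −δ·(e₁(t)² + e₂(t)²)`. -/
theorem stmt_16
    (aₘ b m₁ m₂ γ₁ γ₂ γ₃ L y r δ t : ℝ)
    (e₁ e₂ kt lt wt : ℝ → ℝ)
    (ham : 0 < aₘ) (hb : b ≠ 0)
    (hm₁ : 0 < m₁) (hm₂ : 0 < m₂)
    (hγ₁ : 0 < γ₁) (hγ₂ : 0 < γ₂) (hγ₃ : 0 < γ₃)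
    (hd1 : HasDerivAt e₁ (-aₘ * e₁ t + L * e₂ t) t)
    (hd2 : HasDerivAt e₂
      (-(aₘ + L) * e₂ t - b * kt t * y + b * lt t * r + b * wt t) t)
    (hd3 : HasDerivAt kt (Real.sign b * y * γ₁ * m₂ * e₂ t) t)
    (hd4 : HasDerivAt lt (-(Real.sign b) * r * γ₂ * m₂ * e₂ t) t)
    (hd5 : HasDerivAt wt (-(Real.sign b) * γ₃ * m₂ * e₂ t) t)
    (hδ : 0 < δ)
    (hδhat : 0 < aₘ * m₁ - δ)
    (hδ2 : 0 ≤ aₘ * m₂ - δ)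
    (hL0 : 0 < L)
    (hLmax : L < 4 * (aₘ * m₁ - δ) * m₂ / m₁ ^ 2) :
    deriv (fun s => (1/2) * m₁ * (e₁ s) ^ 2 + (1/2) * m₂ * (e₂ s) ^ 2
        + (|b| / (2 * γ₁)) * (kt s) ^ 2 + (|b| / (2 * γ₂)) * (lt s) ^ 2
        + (|b| / (2 * γ₃)) * (wt s) ^ 2) t
      ≤ -δ * ((e₁ t) ^ 2 + (e₂ t) ^ 2) := by
  set d1 := -aₘ * e₁ t + L * e₂ t with hD1
  set d2 := -(aₘ + L) * e₂ t - b * kt t * y + b * lt t * r + b * wt t with hD2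
  set d3 := Real.sign b * y * γ₁ * m₂ * e₂ t with hD3
  set d4 := -(Real.sign b) * r * γ₂ * m₂ * e₂ t with hD4
  set d5 := -(Real.sign b) * γ₃ * m₂ * e₂ t with hD5
  have hV : HasDerivAt (fun s => (1/2) * m₁ * (e₁ s) ^ 2 + (1/2) * m₂ * (e₂ s) ^ 2
        + (|b| / (2 * γ₁)) * (kt s) ^ 2 + (|b| / (2 * γ₂)) * (lt s) ^ 2
        + (|b| / (2 * γ₃)) * (wt s) ^ 2)
      ((1/2) * m₁ * (2 * e₁ t ^ 1 * d1) + (1/2) * m₂ * (2 * e₂ t ^ 1 * d2)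
        + (|b| / (2 * γ₁)) * (2 * kt t ^ 1 * d3) + (|b| / (2 * γ₂)) * (2 * lt t ^ 1 * d4)
        + (|b| / (2 * γ₃)) * (2 * wt t ^ 1 * d5)) t := by
    exact ((((((hd1.pow 2).const_mul _).add ((hd2.pow 2).const_mul _)).add
      ((hd3.pow 2).const_mul _)).add ((hd4.pow 2).const_mul _)).add
      ((hd5.pow 2).const_mul _))
  rw [hV.deriv]
  have habs : |b| = Real.sign b * b := by
    rcases lt_or_gt_of_ne hb with h | h
    · rw [Real.sign_of_neg h, abs_of_neg h]; ring
    · rw [Real.sign_of_pos h, abs_of_pos h]; ring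
  have hsign2 : Real.sign b * Real.sign b = 1 := by
    rcases lt_or_gt_of_ne hb with h | h
    · rw [Real.sign_of_neg h]; ring
    · rw [Real.sign_of_pos h]; ring
  have hγ₁' : γ₁ ≠ 0 := ne_of_gt hγ₁
  have hγ₂' : γ₂ ≠ 0 := ne_of_gt hγ₂
  have hγ₃' : γ₃ ≠ 0 := ne_of_gt hγ₃
  have hsimp : (1/2) * m₁ * (2 * e₁ t ^ 1 * d1) + (1/2) * m₂ * (2 * e₂ t ^ 1 * d2)
        + (|b| / (2 * γ₁)) * (2 * kt t ^ 1 * d3) + (|b| / (2 * γ₂)) * (2 * lt t ^ 1 * d4)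
        + (|b| / (2 * γ₃)) * (2 * wt t ^ 1 * d5)
      = -aₘ * m₁ * e₁ t ^ 2 + m₁ * L * e₁ t * e₂ t - (aₘ + L) * m₂ * e₂ t ^ 2 := by
    have hsq : Real.sign b ^ 2 = 1 := by rw [sq]; exact hsign2
    rw [hD1, hD2, hD3, hD4, hD5, habs]
    field_simp
    ring_nf
    rw [hsq]
    ring
  rw [hsimp]
  rw [lt_div_iff₀ (by positivity : (0:ℝ) < m₁ ^ 2)] at hLmax
  have hL2 : m₁ ^ 2 * L ^ 2 < 4 * (aₘ * m₁ - δ) * m₂ * L := by nlinarith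
  nlinarith [sq_nonneg (2 * (aₘ * m₁ - δ) * e₁ t - m₁ * L * e₂ t), hδhat,
    mul_nonneg hδ2 (sq_nonneg (e₂ t)), hL2, sq_nonneg (e₂ t),
    mul_pos hL0 hm₂, mul_nonneg (mul_pos hL0 hm₂).le (sq_nonneg (e₂ t))]
end
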